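/- arXiv:2102.10063 — 2 statements merged into one kernel-verified Lean document; each statement's English description precedes it below -/
import Mathlib

section
/- Let (Ω, 𝓕, P) be a probability space with a filtration (𝓕_t)_{t=0,…,k}, let ε ∈ [0,1), and let Y_1, …, Y_k be {0,1}-valued random variables such that Y_t is 𝓕_t-measurable and, for every t ∈ {1,…,k}, the conditional probability P(Y_t = 1 | 𝓕_{t−1}) ≥ 1 − ε almost surely. Then for every natural number m ≤ k, the probability that at most m of the Y_t equal 0 satisfies P(∑_{t=1}^k (1 − Y_t) ≤ m) ≥ ∑_{i=0}^{m} (k choose i) · ε^i · (1−ε)^{k−i}. -/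
/-!
Let `S_t` be the number of unintended transitions among the first `t` steps. The event
`S_t = j` lies in `𝓕_t`, so on it step `t + 1` is intended with probability at least `1 - ε`,
and then `S_{t+1} = j`; hence
`P(S_{t+1} < j + 1) ≥ P(S_t < j) + (1 - ε) P(S_t = j) = ε P(S_t < j) + (1 - ε) P(S_t < j + 1)`.
The binomial tail `P(Bin(t, ε) < j)` satisfies this recursion with equality (Pascal's rule), and
the recursion is monotone for `0 ≤ ε ≤ 1`, so induction on `t` compares the two.
-/

open MeasureTheory

lemma Nat.cast_choose_succ_mul_pow_sub (x : ℝ) (n j : ℕ) :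
    (n.choose (j + 1) : ℝ) * x ^ (n - j) = x * (n.choose (j + 1) * x ^ (n - (j + 1))) := by
  rcases lt_or_ge j n with h | h
  · rw [show n - j = n - (j + 1) + 1 by omega, pow_succ]; ring
  · simp [Nat.choose_eq_zero_of_lt (Nat.lt_succ_of_le h)]

open Finset in
/-- `binomLowerTail ε n j` is `P(Binomial(n, ε) < j)`; note the strict inequality. -/
noncomputable def binomLowerTail (ε : ℝ) (n j : ℕ) : ℝ :=
  ∑ i ∈ range j, (n.choose i : ℝ) * ε ^ i * (1 - ε) ^ (n - i)

namespace binomLowerTail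

variable (ε : ℝ)

@[simp] lemma zero_right (n : ℕ) : binomLowerTail ε n 0 = 0 := by
  simp [binomLowerTail]

lemma zero_succ (j : ℕ) : binomLowerTail ε 0 (j + 1) = 1 := by
  simp [binomLowerTail, Finset.sum_range_succ']

lemma succ_right (n j : ℕ) :
    binomLowerTail ε n (j + 1) = binomLowerTail ε n j + n.choose j * ε ^ j * (1 - ε) ^ (n - j) :=
  Finset.sum_range_succ _ _

lemma succ_succ (n j : ℕ) :
    binomLowerTail ε (n + 1) (j + 1) =
      ε * binomLowerTail ε n j + (1 - ε) * binomLowerTail ε n (j + 1) := by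
  induction j with
  | zero => simp [binomLowerTail, pow_succ]; ring
  | succ j ih =>
    rw [succ_right ε (n + 1) (j + 1), ih, succ_right ε n (j + 1), Nat.choose_succ_succ,
      Nat.cast_add, Nat.add_sub_add_right]
    have hpow := Nat.cast_choose_succ_mul_pow_sub (1 - ε) n j
    have hn := succ_right ε n j
    linear_combination ε ^ (j + 1) * hpow - ε * hn

end binomLowerTail

lemma binomLowerTail_le_of_recurrence {ε : ℝ} (hε0 : 0 ≤ ε) (hε1 : ε ≤ 1) {f : ℕ → ℕ → ℝ} {n : ℕ}
    (hzero : ∀ t, 0 ≤ f t 0) (hbase : ∀ j, 1 ≤ f 0 (j + 1))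
    (hstep : ∀ t < n, ∀ j, ε * f t j + (1 - ε) * f t (j + 1) ≤ f (t + 1) (j + 1)) :
    ∀ t ≤ n, ∀ j, binomLowerTail ε t j ≤ f t j := by
  intro t ht j
  induction t generalizing j with
  | zero =>
    cases j with
    | zero => simpa using hzero 0
    | succ j => simpa [binomLowerTail.zero_succ] using hbase j
  | succ t ih =>
    cases j with
    | zero => simpa using hzero (t + 1)
    | succ j =>
      have ih' := ih (by omega)
      rw [binomLowerTail.succ_succ]
      calc ε * binomLowerTail ε t j + (1 - ε) * binomLowerTail ε t (j + 1)
          ≤ ε * f t j + (1 - ε) * f t (j + 1) :=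
            add_le_add (mul_le_mul_of_nonneg_left (ih' j) hε0)
              (mul_le_mul_of_nonneg_left (ih' (j + 1)) (sub_nonneg.2 hε1))
        _ ≤ f (t + 1) (j + 1) := hstep t (by omega) j

section

variable {Ω : Type*} {m m0 : MeasurableSpace Ω} {P : Measure Ω}

lemma mul_measureReal_le_measureReal_inter_of_condExp [IsFiniteMeasure P] (hm : m ≤ m0)
    {c : ℝ} {s A : Set Ω} (hs : MeasurableSet s)
    (hcond : ∀ᵐ ω ∂P, c ≤ (P[s.indicator (fun _ => (1 : ℝ)) | m]) ω)
    (hA : MeasurableSet[m] A) :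
    c * P.real A ≤ P.real (A ∩ s) :=
  calc c * P.real A = ∫ _ in A, c ∂P := by rw [setIntegral_const, smul_eq_mul, mul_comm]
    _ ≤ ∫ ω in A, (P[s.indicator (fun _ => (1 : ℝ)) | m]) ω ∂P :=
      setIntegral_mono_ae (integrableOn_const (measure_ne_top P A))
        integrable_condExp.integrableOn hcond
    _ = ∫ ω in A, s.indicator (fun _ => (1 : ℝ)) ω ∂P :=
      setIntegral_condExp hm ((integrable_const 1).indicator hs) hA
    _ = P.real (A ∩ s) := by rw [setIntegral_indicator hs, setIntegral_const, smul_eq_mul, mul_one]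

/-- `S'` is dominated below `j + 1` as if it were `S` plus an independent `Bernoulli(ε)`. -/
lemma measureReal_lt_succ_ge_of_condExp [IsFiniteMeasure P] (hm : m ≤ m0) {ε : ℝ}
    {s : Set Ω} (hs : MeasurableSet s)
    (hcond : ∀ᵐ ω ∂P, 1 - ε ≤ (P[s.indicator (fun _ => (1 : ℝ)) | m]) ω)
    {S S' : Ω → ℕ} (hS : Measurable[m] S) (hle : ∀ ω, S' ω ≤ S ω + 1)
    (hle_s : ∀ ω ∈ s, S' ω ≤ S ω) (j : ℕ) :
    ε * P.real {ω | S ω < j} + (1 - ε) * P.real {ω | S ω < j + 1} ≤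
      P.real {ω | S' ω < j + 1} := by
  have heq : MeasurableSet[m] {ω | S ω = j} := hS (measurableSet_singleton j)
  have hsplit : P.real {ω | S ω < j + 1} = P.real {ω | S ω < j} + P.real {ω | S ω = j} := by
    rw [← measureReal_union _ (hm _ heq)]
    · congr 1; ext ω; simp [le_iff_lt_or_eq]
    · exact Set.disjoint_left.2 fun ω h h' => (ne_of_lt h) h'
  have hsub : {ω | S ω < j} ∪ ({ω | S ω = j} ∩ s) ⊆ {ω | S' ω < j + 1} := by
    rintro ω (h | ⟨h, hω⟩)
    · have := hle ω; simp only [Set.mem_ofPred_eq] at h ⊢; omega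
    · have := hle_s ω hω; simp only [Set.mem_ofPred_eq] at h ⊢; omega
  have hdisj : Disjoint {ω | S ω < j} ({ω | S ω = j} ∩ s) :=
    Set.disjoint_left.2 fun ω h h' => (ne_of_lt h) h'.1
  calc ε * P.real {ω | S ω < j} + (1 - ε) * P.real {ω | S ω < j + 1}
      = P.real {ω | S ω < j} + (1 - ε) * P.real {ω | S ω = j} := by rw [hsplit]; ring
    _ ≤ P.real {ω | S ω < j} + P.real ({ω | S ω = j} ∩ s) := by
      gcongr; exact mul_measureReal_le_measureReal_inter_of_condExp hm hs hcond heq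
    _ = P.real ({ω | S ω < j} ∪ ({ω | S ω = j} ∩ s)) :=
      (measureReal_union hdisj ((hm _ heq).inter hs)).symm
    _ ≤ P.real {ω | S' ω < j + 1} := measureReal_mono hsub

end

theorem stmt_2_general {Ω : Type*} {m0 : MeasurableSpace Ω} (P : Measure Ω)
    [IsProbabilityMeasure P] (ℱ : Filtration ℕ m0)
    (k : ℕ) (ε : ℝ) (hε0 : 0 ≤ ε) (hε1 : ε < 1)
    (Y : ℕ → Ω → ℕ)
    (hmeas : ∀ t ∈ Finset.Icc 1 k, Measurable[ℱ t] (Y t))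
    (hcond : ∀ t ∈ Finset.Icc 1 k, ∀ᵐ ω ∂P,
      1 - ε ≤ (P[({ω' | Y t ω' = 1}).indicator (fun _ => (1 : ℝ)) | ℱ (t - 1)]) ω)
    (m : ℕ) :
    ENNReal.ofReal (∑ i ∈ Finset.range (m + 1),
        (k.choose i : ℝ) * ε ^ i * (1 - ε) ^ (k - i)) ≤
      P {ω | ∑ t ∈ Finset.Icc 1 k, (1 - Y t ω) ≤ m} := by
  set S : ℕ → Ω → ℕ := fun t ω => ∑ s ∈ Finset.Icc 1 t, (1 - Y s ω)
  have hS : ∀ t ≤ k, Measurable[ℱ t] (S t) := fun t ht =>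
    Finset.measurable_sum _ fun s hs =>
      ((hmeas s (by simp only [Finset.mem_Icc] at hs ⊢; omega)).mono
        (ℱ.mono (Finset.mem_Icc.1 hs).2) le_rfl).const_sub 1
  have hstep : ∀ t < k, ∀ j, ε * P.real {ω | S t ω < j} + (1 - ε) * P.real {ω | S t ω < j + 1} ≤
      P.real {ω | S (t + 1) ω < j + 1} := by
    intro t ht j
    have hmem : t + 1 ∈ Finset.Icc 1 k := Finset.mem_Icc.2 ⟨by omega, ht⟩
    have hsucc (ω : Ω) : S (t + 1) ω = S t ω + (1 - Y (t + 1) ω) :=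
      Finset.sum_Icc_succ_top (by omega) _
    refine measureReal_lt_succ_ge_of_condExp (ℱ.le t) (s := {ω' | Y (t + 1) ω' = 1})
      (ℱ.le _ _ (hmeas _ hmem (measurableSet_singleton 1))) (hcond _ hmem)
      (hS t ht.le) (fun ω => ?_) (fun ω hω => ?_) j
    · rw [hsucc]; omega
    · rw [hsucc, show Y (t + 1) ω = 1 from hω]; simp
  have hbound := binomLowerTail_le_of_recurrence hε0 hε1.le
    (f := fun t j => P.real {ω | S t ω < j}) (fun _ => measureReal_nonneg) (fun j => by simp [S])
    hstep k le_rfl (m + 1)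
  refine ENNReal.ofReal_le_of_le_toReal ?_
  simpa [S, Nat.lt_succ_iff, binomLowerTail, Measure.real_def] using hbound

theorem stmt_2 {Ω : Type*} {m0 : MeasurableSpace Ω} (P : Measure Ω)
    [IsProbabilityMeasure P] (ℱ : Filtration ℕ m0)
    (k : ℕ) (ε : ℝ) (hε0 : 0 ≤ ε) (hε1 : ε < 1)
    (Y : ℕ → Ω → ℕ)
    (hY01 : ∀ t ∈ Finset.Icc 1 k, ∀ ω, Y t ω ≤ 1)
    (hmeas : ∀ t ∈ Finset.Icc 1 k, Measurable[ℱ t] (Y t))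
    (hcond : ∀ t ∈ Finset.Icc 1 k, ∀ᵐ ω ∂P,
      1 - ε ≤ (P[({ω' | Y t ω' = 1}).indicator (fun _ => (1 : ℝ)) | ℱ (t - 1)]) ω)
    (m : ℕ) (hm : m ≤ k) :
    ENNReal.ofReal (∑ i ∈ Finset.range (m + 1),
        (k.choose i : ℝ) * ε ^ i * (1 - ε) ^ (k - i)) ≤
      P {ω | ∑ t ∈ Finset.Icc 1 k, (1 - Y t ω) ≤ m} :=
  stmt_2_general P ℱ k ε hε0 hε1 Y hmeas hcond m
end

section
/- Let S be a finite type, ε ∈ [0,1), κ : S → PMF S a Markov kernel, F ⊆ S, and d : S → ℕ a function such that: (i) d(s) = 0 if and only if s ∈ F; (ii) κ(s) = PMF.pure s for every s ∈ F; (iii) for every s ∉ F, the total mass that κ(s) assigns to the set {s' : d(s') + 1 = d(s)} is at least 1 − ε; and (iv) for every s and every s' in the support of κ(s), d(s') ≤ d(s) + 1. Let ν : PMF S be an initial distribution and D ∈ ℕ be such that d(s') ≤ D for every s' in the support of ν. Then for every natural number k with D ≤ k, the k-step distribution μ_k started from μ_0 = ν satisfies μ_k(F) ≥ ∑_{i=0}^{⌊(k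 − D)/2⌋} (k choose i) · ε^i · (1−ε)^{k−i}. -/
/-!
Compare the chain with the walk on `ℕ` that starts at `d s` and, at each step, moves down by one
with probability at least `1 - ε` and up by at most one otherwise. Among `k` steps with at most
`m` failures the walk descends by at least `k - 2m`, so if `d s + 2m ≤ k` it has entered the
absorbing set `F` by time `k`. Conditioning on the first step turns this into an induction on `k`
whose arithmetic is Pascal's rule for the lower tail `P(Bin(k, ε) ≤ m)`.
-/

open scoped ENNReal

/-- The `k`-step distributions of the Markov chain with kernel `κ`
starting from the initial distribution `μ`. -/
noncomputable def kstep {S : Type*} (κ : S → PMF S) (μ : PMF S) : ℕ → PMF S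
  | 0 => μ
  | k + 1 => (kstep κ μ k).bind κ

open Finset

namespace PMF

variable {α β : Type*} {p : PMF α} {f : α → PMF β} {s : Set β}

theorem toOuterMeasure_apply_add_compl (p : PMF α) (A : Set α) :
    p.toOuterMeasure A + p.toOuterMeasure Aᶜ = 1 := by
  rw [toOuterMeasure_apply, toOuterMeasure_apply, ← ENNReal.tsum_add]
  simp only [Set.indicator_self_add_compl_apply, tsum_coe]

theorem le_toOuterMeasure_bind_apply {c : ℝ≥0∞}
    (h : ∀ a ∈ p.support, c ≤ (f a).toOuterMeasure s) : c ≤ (p.bind f).toOuterMeasure s := by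
  rw [toOuterMeasure_bind_apply]
  calc c = ∑' a, p a * c := by rw [ENNReal.tsum_mul_right, p.tsum_coe, one_mul]
    _ ≤ ∑' a, p a * (f a).toOuterMeasure s := ENNReal.tsum_le_tsum fun a => by
        by_cases ha : a ∈ p.support
        · exact mul_le_mul_right (h a ha) _
        · simp [(p.apply_eq_zero_iff a).2 ha]

theorem mul_add_one_sub_mul_le_toOuterMeasure_bind_apply {A : Set α} {e x y : ℝ≥0∞}
    (he : e ≤ p.toOuterMeasure A) (hyx : y ≤ x) (hx : ∀ a ∈ A, x ≤ (f a).toOuterMeasure s)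
    (hy : ∀ a ∈ p.support, y ≤ (f a).toOuterMeasure s) :
    e * x + (1 - e) * y ≤ (p.bind f).toOuterMeasure s := by
  set q := p.toOuterMeasure A
  set q' := p.toOuterMeasure Aᶜ
  have hqq' : q + q' = 1 := p.toOuterMeasure_apply_add_compl A
  have he_ne_top : e ≠ ∞ :=
    ne_top_of_le_ne_top ENNReal.one_ne_top (he.trans (hqq' ▸ le_self_add))
  have hsplit : 1 - e = (q - e) + q' := by rw [ENNReal.sub_add_eq_add_sub he he_ne_top, hqq']
  have hpoint : ∀ a, A.indicator p a * x + Aᶜ.indicator p a * y ≤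
      p a * (f a).toOuterMeasure s := fun a => by
    by_cases ha : a ∈ A
    · simpa [ha] using mul_le_mul_right (hx a ha) _
    · by_cases hsupp : a ∈ p.support
      · simpa [ha] using mul_le_mul_right (hy a hsupp) _
      · simp [(p.apply_eq_zero_iff a).2 hsupp]
  calc e * x + (1 - e) * y = e * x + (q - e) * y + q' * y := by rw [hsplit]; ring
    _ ≤ e * x + (q - e) * x + q' * y := by gcongr
    _ = ∑' a, (A.indicator p a * x + Aᶜ.indicator p a * y) := by
        rw [← add_mul, add_tsub_cancel_of_le he, ENNReal.tsum_add, ENNReal.tsum_mul_right,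
          ENNReal.tsum_mul_right, ← toOuterMeasure_apply, ← toOuterMeasure_apply]
    _ ≤ (p.bind f).toOuterMeasure s := by
        rw [toOuterMeasure_bind_apply]; exact ENNReal.tsum_le_tsum hpoint

end PMF

noncomputable def binomialCDF (ε : ℝ) (k m : ℕ) : ℝ :=
  ∑ i ∈ range (m + 1), (k.choose i : ℝ) * ε ^ i * (1 - ε) ^ (k - i)

section binomialCDF

variable {ε : ℝ}

theorem choose_mul_pow_mul_pow_succ_succ (ε : ℝ) (k i : ℕ) :
    ((k + 1).choose (i + 1) : ℝ) * ε ^ (i + 1) * (1 - ε) ^ (k + 1 - (i + 1)) =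
      (1 - ε) * ((k.choose (i + 1) : ℝ) * ε ^ (i + 1) * (1 - ε) ^ (k - (i + 1))) +
        ε * ((k.choose i : ℝ) * ε ^ i * (1 - ε) ^ (k - i)) := by
  rw [Nat.choose_succ_succ', Nat.add_sub_add_right]
  push_cast
  rcases lt_or_ge i k with hik | hki
  · rw [show k - i = k - (i + 1) + 1 by omega]
    ring
  · rw [Nat.choose_eq_zero_of_lt (by omega : k < i + 1)]
    ring

theorem binomialCDF_succ_zero (ε : ℝ) (k : ℕ) :
    binomialCDF ε (k + 1) 0 = (1 - ε) * binomialCDF ε k 0 := by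
  simp [binomialCDF, pow_succ, mul_comm]

theorem binomialCDF_succ_succ (ε : ℝ) (k m : ℕ) :
    binomialCDF ε (k + 1) (m + 1) =
      (1 - ε) * binomialCDF ε k (m + 1) + ε * binomialCDF ε k m := by
  unfold binomialCDF
  rw [sum_range_succ', sum_range_succ' _ (m + 1)]
  simp only [choose_mul_pow_mul_pow_succ_succ, sum_add_distrib, ← mul_sum]
  simp only [Nat.choose_zero_right, Nat.cast_one, pow_zero, one_mul, Nat.sub_zero, pow_succ]
  ring

theorem binomialCDF_nonneg (hε0 : 0 ≤ ε) (hε1 : ε ≤ 1) (k m : ℕ) : 0 ≤ binomialCDF ε k m :=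
  sum_nonneg fun i _ => by
    have : 0 ≤ 1 - ε := by linarith
    positivity

theorem binomialCDF_mono (hε0 : 0 ≤ ε) (hε1 : ε ≤ 1) (k : ℕ) : Monotone (binomialCDF ε k) :=
  fun m m' h => sum_le_sum_of_subset_of_nonneg (range_subset_range.2 (by omega)) fun i _ _ => by
    have : 0 ≤ 1 - ε := by linarith
    positivity

theorem binomialCDF_self (ε : ℝ) (k : ℕ) : binomialCDF ε k k = 1 := by
  have h := (add_pow ε (1 - ε) k).symm
  rw [add_sub_cancel, one_pow] at h
  rw [← h, binomialCDF]
  exact sum_congr rfl fun i _ => by ring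

theorem binomialCDF_le_one (hε0 : 0 ≤ ε) (hε1 : ε ≤ 1) {k m : ℕ} (hm : m ≤ k) :
    binomialCDF ε k m ≤ 1 :=
  binomialCDF_self ε k ▸ binomialCDF_mono hε0 hε1 k hm

end binomialCDF

section kstep

variable {S : Type*} (κ : S → PMF S)

theorem kstep_succ' (μ : PMF S) (k : ℕ) : kstep κ μ (k + 1) = kstep κ (μ.bind κ) k := by
  induction k with
  | zero => rfl
  | succ k ih => rw [kstep, ih, kstep]

theorem kstep_eq_bind (μ : PMF S) (k : ℕ) :
    kstep κ μ k = μ.bind fun s => kstep κ (PMF.pure s) k := by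
  induction k with
  | zero => exact μ.bind_pure.symm
  | succ k ih => rw [kstep, ih, PMF.bind_bind]; rfl

theorem kstep_pure_succ (s : S) (k : ℕ) :
    kstep κ (PMF.pure s) (k + 1) = (κ s).bind fun t => kstep κ (PMF.pure t) k := by
  rw [kstep_succ', PMF.pure_bind, kstep_eq_bind]

end kstep

theorem kstep_pure_of_absorbing {S : Type*} {κ : S → PMF S} {s : S} (h : κ s = PMF.pure s)
    (k : ℕ) : kstep κ (PMF.pure s) k = PMF.pure s := by
  induction k with
  | zero => rfl
  | succ k ih => rw [kstep, ih, PMF.pure_bind, h]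

theorem ofReal_binomialCDF_le_kstep_pure_toOuterMeasure {S : Type*} {ε : ℝ} (hε0 : 0 ≤ ε)
    (hε1 : ε ≤ 1) {κ : S → PMF S} {F : Set S} {d : S → ℕ} (hF : ∀ s, d s = 0 → s ∈ F)
    (habs : ∀ s ∈ F, κ s = PMF.pure s)
    (hdrift : ∀ s ∉ F, ENNReal.ofReal (1 - ε) ≤ (κ s).toOuterMeasure {s' | d s' + 1 = d s})
    (hjump : ∀ s, ∀ s' ∈ (κ s).support, d s' ≤ d s + 1) (k m : ℕ) (s : S)
    (hs : d s + 2 * m ≤ k) :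
    ENNReal.ofReal (binomialCDF ε k m) ≤ (kstep κ (PMF.pure s) k).toOuterMeasure F := by
  have absorbed : ∀ k m s, s ∈ F → m ≤ k →
      ENNReal.ofReal (binomialCDF ε k m) ≤ (kstep κ (PMF.pure s) k).toOuterMeasure F :=
    fun k m s hsF hm => by
      rw [kstep_pure_of_absorbing (habs s hsF), PMF.toOuterMeasure_pure_apply, if_pos hsF]
      exact ENNReal.ofReal_le_one.2 (binomialCDF_le_one hε0 hε1 hm)
  have hε : ENNReal.ofReal ε = 1 - ENNReal.ofReal (1 - ε) := by
    rw [← ENNReal.ofReal_one, ← ENNReal.ofReal_sub _ (by linarith), sub_sub_cancel]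
  induction k generalizing m s with
  | zero => exact absorbed 0 m s (hF s (by omega)) (by omega)
  | succ k ih =>
    by_cases hsF : s ∈ F
    · exact absorbed _ m s hsF (by omega)
    have step : ∀ x y, y ≤ x →
        (∀ t, d t + 1 = d s → x ≤ (kstep κ (PMF.pure t) k).toOuterMeasure F) →
        (∀ t ∈ (κ s).support, y ≤ (kstep κ (PMF.pure t) k).toOuterMeasure F) →
        ENNReal.ofReal (1 - ε) * x + ENNReal.ofReal ε * y ≤
          (kstep κ (PMF.pure s) (k + 1)).toOuterMeasure F := fun x y hyx hx hy => by
      rw [kstep_pure_succ, hε]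
      exact PMF.mul_add_one_sub_mul_le_toOuterMeasure_bind_apply (hdrift s hsF) hyx hx hy
    have hds : d s ≠ 0 := fun h => hsF (hF s h)
    cases m with
    | zero =>
      rw [binomialCDF_succ_zero, ENNReal.ofReal_mul (by linarith)]
      simpa using step _ 0 zero_le (fun t ht => ih 0 t (by omega)) (fun _ _ => zero_le)
    | succ m =>
      rw [binomialCDF_succ_succ, ENNReal.ofReal_add
        (mul_nonneg (by linarith) (binomialCDF_nonneg hε0 hε1 _ _))
        (mul_nonneg hε0 (binomialCDF_nonneg hε0 hε1 _ _)),
        ENNReal.ofReal_mul (by linarith), ENNReal.ofReal_mul hε0]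
      exact step _ _ (ENNReal.ofReal_le_ofReal (binomialCDF_mono hε0 hε1 k m.le_succ))
        (fun t ht => ih _ t (by omega))
        (fun t ht => ih m t (by have := hjump s t ht; omega))

theorem stmt_8_general {S : Type*} (ε : ℝ) (hε0 : 0 ≤ ε) (hε1 : ε < 1)
    (κ : S → PMF S) (F : Set S) (d : S → ℕ)
    (h1 : ∀ s, d s = 0 ↔ s ∈ F)
    (h2 : ∀ s ∈ F, κ s = PMF.pure s)
    (h3 : ∀ s ∉ F, ENNReal.ofReal (1 - ε) ≤ (κ s).toOuterMeasure {s' | d s' + 1 = d s})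
    (h4 : ∀ s, ∀ s' ∈ (κ s).support, d s' ≤ d s + 1)
    (ν : PMF S) (D : ℕ) (hD : ∀ s' ∈ ν.support, d s' ≤ D)
    (k : ℕ) (hk : D ≤ k) :
    ENNReal.ofReal (∑ i ∈ Finset.range ((k - D) / 2 + 1),
        (k.choose i : ℝ) * ε ^ i * (1 - ε) ^ (k - i)) ≤
      (kstep κ ν k).toOuterMeasure F := by
  rw [kstep_eq_bind]
  exact PMF.le_toOuterMeasure_bind_apply fun s hs =>
    ofReal_binomialCDF_le_kstep_pure_toOuterMeasure hε0 hε1.le (fun s => (h1 s).1) h2 h3 h4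
      k _ s (by have := hD s hs; omega)

theorem stmt_8 {S : Type*} [Fintype S] (ε : ℝ) (hε0 : 0 ≤ ε) (hε1 : ε < 1)
    (κ : S → PMF S) (F : Set S) (d : S → ℕ)
    (h1 : ∀ s, d s = 0 ↔ s ∈ F)
    (h2 : ∀ s ∈ F, κ s = PMF.pure s)
    (h3 : ∀ s ∉ F, ENNReal.ofReal (1 - ε) ≤ (κ s).toOuterMeasure {s' | d s' + 1 = d s})
    (h4 : ∀ s, ∀ s' ∈ (κ s).support, d s' ≤ d s + 1)
    (ν : PMF S) (D : ℕ) (hD : ∀ s' ∈ ν.support, d s' ≤ D)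
    (k : ℕ) (hk : D ≤ k) :
    ENNReal.ofReal (∑ i ∈ Finset.range ((k - D) / 2 + 1),
        (k.choose i : ℝ) * ε ^ i * (1 - ε) ^ (k - i)) ≤
      (kstep κ ν k).toOuterMeasure F :=
  stmt_8_general ε hε0 hε1 κ F d h1 h2 h3 h4 ν D hD k hk
end
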